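/- arXiv:1906.03579 — 7 statements merged into one kernel-verified Lean document; each statement's English description precedes it below -/
import Mathlib

section
/- Under the full-rank condition (Σ_u α_{u,i} < 1 for every class label i), letting κ_α = max over class labels i of 1/(1 − Σ_u α_{u,i}), the total variation distance between the original distributions is at most κ_α times that between the corrupted distributions: d_TV(P, Q) ≤ κ_α · d_TV(P̃, Q̃). (Theorem 1, upper bound, eq. (3).) -/
open scoped BigOperators
open MeasureTheory

/-- `P` is a probability mass function on `Z`. -/
def IsPMF {Z : Type*} (P : Z → ℝ) : Prop :=
  (∀ z, 0 ≤ P z) ∧ Summable P ∧ ∑' z, P z = 1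

/-- Total variation distance between two probability mass functions. -/
noncomputable def dTV {Z : Type*} (P Q : Z → ℝ) : ℝ :=
  (1 / 2) * ∑' z, |P z - Q z|

/-- The corrupted labeled distribution obtained by passing labels through the channel `C`:
`P̃(x,ỹ) = ∑ j, P(x,j) · C j ỹ`. -/
noncomputable def corrupt {X : Type*} {k : ℕ} (P : X × Fin k → ℝ)
    (C : Matrix (Fin k) (Fin k) ℝ) : X × Fin k → ℝ :=
  fun z => ∑ j, P (z.1, j) * C j z.2

/-- The confusion matrix `C = diag(𝟙 − Σ_u α_u) + Σ_u α_u e_u^T`, where the uncertain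
labels are `m, …, m + mt − 1` (the label `Fin.natAdd m u` for `u : Fin mt`). -/
noncomputable def confusion (m mt : ℕ) (α : Fin mt → Fin (m + mt) → ℝ) :
    Matrix (Fin (m + mt)) (Fin (m + mt)) ℝ :=
  Matrix.diagonal (fun i => 1 - ∑ u, α u i) +
    ∑ u, Matrix.vecMulVec (α u) (Pi.single (Fin.natAdd m u) 1)

lemma confusion_apply_class (m mt : ℕ) (α : Fin mt → Fin (m + mt) → ℝ)
    (i j : Fin (m + mt)) (hj : (j : ℕ) < m) :
    confusion m mt α i j = if i = j then 1 - ∑ u, α u i else 0 := by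
  have h0 : ∀ u : Fin mt, ((Pi.single (Fin.natAdd m u) (1:ℝ) : Fin (m+mt) → ℝ)) j = 0 := by
    intro u
    apply Pi.single_eq_of_ne
    intro h
    subst h
    simp [Fin.natAdd] at hj
  simp [confusion, Matrix.add_apply, Matrix.sum_apply, Matrix.vecMulVec_apply, h0,
    Matrix.diagonal_apply]

lemma corrupt_class {X : Type*} {m mt : ℕ} (α : Fin mt → Fin (m + mt) → ℝ)
    (P : X × Fin (m + mt) → ℝ) (x : X) (j : Fin (m + mt)) (hj : (j : ℕ) < m) :
    corrupt P (confusion m mt α) (x, j) = P (x, j) * (1 - ∑ u, α u j) := by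
  simp only [corrupt]
  have : ∀ i : Fin (m + mt),
      P (x, i) * confusion m mt α i j = if i = j then P (x, i) * (1 - ∑ u, α u i) else 0 := by
    intro i
    rw [confusion_apply_class m mt α i j hj]
    split <;> simp
  simp only [this]
  simp

lemma confusion_nonneg (m mt : ℕ) (α : Fin mt → Fin (m + mt) → ℝ)
    (hα0 : ∀ u i, 0 ≤ α u i)
    (hαu : ∀ (u : Fin mt) (i : Fin (m + mt)), m ≤ (i : ℕ) → α u i = 0)
    (hfull : ∀ i : Fin (m + mt), (i : ℕ) < m → ∑ u, α u i < 1)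
    (i j : Fin (m + mt)) : 0 ≤ confusion m mt α i j := by
  have hs : 0 ≤ 1 - ∑ u, α u i := by
    by_cases h : (i : ℕ) < m
    · have := hfull i h; linarith
    · have : ∑ u, α u i = 0 := Finset.sum_eq_zero fun u _ => hαu u i (le_of_not_gt h)
      simp [this]
  have h1 : 0 ≤ Matrix.diagonal (fun i => 1 - ∑ u, α u i) i j := by
    rw [Matrix.diagonal_apply]
    split <;> simp_all
  have h2 : 0 ≤ (∑ u, Matrix.vecMulVec (α u) (Pi.single (Fin.natAdd m u) (1:ℝ))) i j := by
    rw [Matrix.sum_apply]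
    apply Finset.sum_nonneg
    intro u _
    rw [Matrix.vecMulVec_apply]
    apply mul_nonneg (hα0 u i)
    rcases eq_or_ne j (Fin.natAdd m u) with h | h
    · subst h; simp
    · rw [Pi.single_eq_of_ne h]
  have := add_nonneg h1 h2
  simpa [confusion, Matrix.add_apply] using this

lemma summable_corrupt {X : Type*} {k : ℕ} (P : X × Fin k → ℝ)
    (C : Matrix (Fin k) (Fin k) ℝ) (hC : ∀ i j, 0 ≤ C i j)
    (hP0 : ∀ z, 0 ≤ P z) (hPs : Summable P) :
    Summable (corrupt P C) := by
  unfold corrupt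
  apply summable_sum
  intro j _
  have hinj : Function.Injective (fun x : X => (x, j)) := fun a b h => (Prod.ext_iff.mp h).1
  have hf : Summable (fun x : X => P (x, j)) := Summable.comp_injective hPs hinj
  have := hf.mul_of_nonneg (g := fun y : Fin k => C j y) (summable_of_finite_support (Set.toFinite _))
    (fun x => hP0 _) (fun y => hC j y)
  exact this

theorem tv_original_le_kappa_mul_tv_corrupted {X : Type*} [Countable X] {m mt : ℕ} (hm : 0 < m) (hmt : 0 < mt)
    (α : Fin mt → Fin (m + mt) → ℝ)
    (hα0 : ∀ u i, 0 ≤ α u i) (hα1 : ∀ u i, α u i ≤ 1)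
    (hαu : ∀ (u : Fin mt) (i : Fin (m + mt)), m ≤ (i : ℕ) → α u i = 0)
    (hfull : ∀ i : Fin (m + mt), (i : ℕ) < m → ∑ u, α u i < 1)
    (P Q : X × Fin (m + mt) → ℝ) (hP : IsPMF P) (hQ : IsPMF Q)
    (hPz : ∀ (x : X) (y : Fin (m + mt)), m ≤ (y : ℕ) → P (x, y) = 0)
    (hQz : ∀ (x : X) (y : Fin (m + mt)), m ≤ (y : ℕ) → Q (x, y) = 0) :
    dTV P Q ≤ (⨆ i : Fin m, 1 / (1 - ∑ u, α u (Fin.castAdd mt i))) *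
      dTV (corrupt P (confusion m mt α)) (corrupt Q (confusion m mt α)) := by
  haveI : Nonempty (Fin m) := ⟨⟨0, hm⟩⟩
  set κ : ℝ := ⨆ i : Fin m, 1 / (1 - ∑ u, α u (Fin.castAdd mt i)) with hκ
  set C := confusion m mt α with hC
  have hCnn : ∀ i j, 0 ≤ C i j := confusion_nonneg m mt α hα0 hαu hfull
  have hκge : ∀ i : Fin m, 1 / (1 - ∑ u, α u (Fin.castAdd mt i)) ≤ κ := by
    intro i
    exact le_ciSup (f := fun i : Fin m => 1 / (1 - ∑ u, α u (Fin.castAdd mt i)))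
      (Set.Finite.bddAbove (Set.finite_range _)) i
  have hκ0 : 0 ≤ κ := by
    have i0 : Fin m := ⟨0, hm⟩
    refine le_trans ?_ (hκge i0)
    have h1 := hfull (Fin.castAdd mt i0) (by simpa using i0.2)
    have h2 : (0:ℝ) < 1 - ∑ u, α u (Fin.castAdd mt i0) := by linarith
    positivity
  -- pointwise bound
  have hpt : ∀ z : X × Fin (m + mt),
      |P z - Q z| ≤ κ * |corrupt P C z - corrupt Q C z| := by
    intro ⟨x, y⟩
    by_cases h : (y : ℕ) < m
    · have hs := hfull y h
      have hs' : 0 < 1 - ∑ u, α u y := by linarith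
      have hPc := corrupt_class α P x y h
      have hQc := corrupt_class α Q x y h
      rw [hPc, hQc, ← sub_mul, abs_mul, abs_of_pos hs']
      have hi : Fin.castAdd mt (⟨(y : ℕ), h⟩ : Fin m) = y := by
        apply Fin.ext; rfl
      have hκle : 1 / (1 - ∑ u, α u y) ≤ κ := by
        have := hκge ⟨(y : ℕ), h⟩
        rwa [hi] at this
      calc |P (x, y) - Q (x, y)|
          = (1 / (1 - ∑ u, α u y)) * (|P (x, y) - Q (x, y)| * (1 - ∑ u, α u y)) := by
            field_simp
        _ ≤ κ * (|P (x, y) - Q (x, y)| * (1 - ∑ u, α u y)) := by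
            apply mul_le_mul_of_nonneg_right hκle
            positivity
    · rw [hPz x y (le_of_not_gt h), hQz x y (le_of_not_gt h)]
      simp only [sub_zero, abs_zero]
      positivity
  have hs1 : Summable (fun z => |P z - Q z|) := (hP.2.1.sub hQ.2.1).abs
  have hsP : Summable (corrupt P C) := summable_corrupt P C hCnn hP.1 hP.2.1
  have hsQ : Summable (corrupt Q C) := summable_corrupt Q C hCnn hQ.1 hQ.2.1
  have hs2 : Summable (fun z => κ * |corrupt P C z - corrupt Q C z|) :=
    ((hsP.sub hsQ).abs).mul_left κ
  have hts := Summable.tsum_le_tsum hpt hs1 hs2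
  rw [tsum_mul_left] at hts
  unfold dTV
  linarith
end

section
/- If Σ_u α_{u,i} < 1 for every class label i, then the confusion matrix C = diag(𝟙 − Σ_u α_u) + Σ_u α_u e_u^T is invertible, and its inverse is C⁻¹ = diag(𝟙 − Σ_u α_u)⁻¹ · (I − Σ_u α_u e_u^T). (Intermediate claim in the proof of Theorem 1, via the Woodbury matrix identity.) -/
open scoped BigOperators
open MeasureTheory

theorem confusion_isUnit_and_inv {m mt : ℕ} (hm : 0 < m) (hmt : 0 < mt)
    (α : Fin mt → Fin (m + mt) → ℝ)
    (hα0 : ∀ u i, 0 ≤ α u i) (hα1 : ∀ u i, α u i ≤ 1)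
    (hαu : ∀ (u : Fin mt) (i : Fin (m + mt)), m ≤ (i : ℕ) → α u i = 0)
    (hfull : ∀ i : Fin (m + mt), (i : ℕ) < m → ∑ u, α u i < 1) :
    IsUnit (confusion m mt α) ∧
      (confusion m mt α)⁻¹ =
        Matrix.diagonal (fun i => (1 - ∑ u, α u i)⁻¹) *
          (1 - ∑ u, Matrix.vecMulVec (α u) (Pi.single (Fin.natAdd m u) 1)) := by
  set d : Fin (m + mt) → ℝ := fun i => 1 - ∑ u, α u i with hd_def
  set S : Matrix (Fin (m + mt)) (Fin (m + mt)) ℝ :=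
    ∑ u, Matrix.vecMulVec (α u) (Pi.single (Fin.natAdd m u) 1) with hS_def
  -- α of any uncertain label is 0
  have hαnat : ∀ (v u : Fin mt), α v (Fin.natAdd m u) = 0 := fun v u =>
    hαu v _ (by simp [Fin.natAdd])
  have hd1 : ∀ u : Fin mt, d (Fin.natAdd m u) = 1 := by
    intro u
    simp [hd_def, hαnat]
  have hdne : ∀ i, d i ≠ 0 := by
    intro i
    by_cases hi : (i : ℕ) < m
    · have := hfull i hi
      have : 0 < d i := by simp [hd_def]; linarith
      exact ne_of_gt this
    · have : ∀ u, α u i = 0 := fun u => hαu u i (le_of_not_gt hi)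
      simp [hd_def, this]
  have hSdinv : S * Matrix.diagonal (fun i => (d i)⁻¹) = S := by
    ext i j
    simp only [hS_def, Matrix.sum_mul, Matrix.sum_apply]
    refine Finset.sum_congr rfl fun u _ => ?_
    simp only [Matrix.mul_diagonal, Matrix.vecMulVec_apply, Pi.single_apply]
    by_cases h : j = Fin.natAdd m u
    · subst h; simp [hd1 u]
    · simp [h]
  have hpair : ∀ u v : Fin mt,
      Matrix.vecMulVec (α v) (Pi.single (Fin.natAdd m v) 1) *
        Matrix.vecMulVec (α u) (Pi.single (Fin.natAdd m u) 1) = 0 := by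
    intro u v
    ext i j
    rw [Matrix.mul_apply]
    simp only [Matrix.vecMulVec_apply, Matrix.zero_apply]
    have hz : ∀ k : Fin (m + mt),
        α v i * (Pi.single (Fin.natAdd m v) 1 : Fin (m + mt) → ℝ) k *
          (α u k * (Pi.single (Fin.natAdd m u) 1 : Fin (m + mt) → ℝ) j) = 0 := by
      intro k
      by_cases h : k = Fin.natAdd m v
      · subst h; rw [hαnat u v]; ring
      · simp [Pi.single_apply, h]
    rw [Finset.sum_congr rfl fun k _ => hz k]
    simp
  have hSS : S * S = 0 := by
    rw [hS_def, Finset.sum_mul_sum]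
    simp only [fun u v => hpair u v]
    simp
  have hDD : Matrix.diagonal d * Matrix.diagonal (fun i => (d i)⁻¹) = 1 := by
    rw [Matrix.diagonal_mul_diagonal]
    have : (fun i => d i * (d i)⁻¹) = fun _ => (1:ℝ) := by
      funext i; exact mul_inv_cancel₀ (hdne i)
    rw [this, Matrix.diagonal_one]
  have hmain : confusion m mt α *
      (Matrix.diagonal (fun i => (d i)⁻¹) * (1 - S)) = 1 := by
    rw [← Matrix.mul_assoc]
    have h1 : confusion m mt α * Matrix.diagonal (fun i => (d i)⁻¹) = 1 + S := by
      rw [confusion, ← hS_def, ← hd_def, Matrix.add_mul, hDD, hSdinv]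
    rw [h1, add_mul, one_mul, mul_sub, mul_one, hSS]
    abel
  refine ⟨?_, ?_⟩
  · have hdet := Matrix.isUnit_det_of_right_inverse hmain
    exact (Matrix.isUnit_iff_isUnit_det _).2 hdet
  · exact Matrix.inv_eq_right_inv hmain
end

section
/- If Σ_u α_{u,i} < 1 for every class label i, then the ∞-operator norm of the inverse confusion matrix equals ‖C⁻¹‖_∞ = max over class labels i of (1 + Σ_u α_{u,i})/(1 − Σ_u α_{u,i}). (Intermediate claim in the proof of Theorem 1.) -/
open scoped BigOperators
open MeasureTheory

/-- `‖T‖_∞ = max_i ∑_j |T i j|` for a square real matrix. -/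
noncomputable def matInfNorm {k : ℕ} (T : Matrix (Fin k) (Fin k) ℝ) : ℝ :=
  ⨆ i, ∑ j, |T i j|

theorem matInfNorm_confusion_inv {m mt : ℕ} (hm : 0 < m) (hmt : 0 < mt)
    (α : Fin mt → Fin (m + mt) → ℝ)
    (hα0 : ∀ u i, 0 ≤ α u i) (hα1 : ∀ u i, α u i ≤ 1)
    (hαu : ∀ (u : Fin mt) (i : Fin (m + mt)), m ≤ (i : ℕ) → α u i = 0)
    (hfull : ∀ i : Fin (m + mt), (i : ℕ) < m → ∑ u, α u i < 1) :
    matInfNorm (confusion m mt α)⁻¹ =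
      ⨆ i : Fin m, (1 + ∑ u, α u (Fin.castAdd mt i)) / (1 - ∑ u, α u (Fin.castAdd mt i)) := by
  haveI : NeZero (m + mt) := ⟨by omega⟩
  set s : Fin (m + mt) → ℝ := fun i => ∑ u, α u i with hs
  set d : Fin (m + mt) → ℝ := fun i => (1 - s i)⁻¹ with hd
  have hs0 : ∀ i, 0 ≤ s i := fun i => Finset.sum_nonneg fun u _ => hα0 u i
  have hsm : ∀ i : Fin (m + mt), m ≤ (i : ℕ) → s i = 0 := fun i hi =>
    Finset.sum_eq_zero fun u _ => hαu u i hi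
  have hpos : ∀ i : Fin (m + mt), 0 < 1 - s i := by
    intro i
    rcases lt_or_ge (i : ℕ) m with h | h
    · have := hfull i h; simp only [hs]; linarith
    · rw [hsm i h]; norm_num
  have hdpos : ∀ i, 0 < d i := fun i => inv_pos.2 (hpos i)
  have hinvmul : ∀ i, (1 - s i) * d i = 1 := fun i => mul_inv_cancel₀ (hpos i).ne'
  have hd1 : ∀ v : Fin mt, d (Fin.natAdd m v) = 1 := by
    intro v
    have : s (Fin.natAdd m v) = 0 := hsm _ (by simp)
    simp [hd, this]
  set M : Matrix (Fin (m + mt)) (Fin (m + mt)) ℝ :=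
    Matrix.diagonal d -
      ∑ u, Matrix.vecMulVec (fun i => d i * α u i) (Pi.single (Fin.natAdd m u) 1) with hM
  -- C * M = 1
  have e1 : Matrix.diagonal (fun i => 1 - s i) * Matrix.diagonal d = 1 := by
    rw [Matrix.diagonal_mul_diagonal]
    have : (fun i => (1 - s i) * d i) = fun _ : Fin (m + mt) => (1 : ℝ) :=
      funext fun i => hinvmul i
    rw [this]
    exact Matrix.diagonal_one
  have e2 : ∀ u, Matrix.diagonal (fun i => 1 - s i) *
      Matrix.vecMulVec (fun i => d i * α u i) (Pi.single (Fin.natAdd m u) 1)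
      = Matrix.vecMulVec (α u) (Pi.single (Fin.natAdd m u) 1) := by
    intro u; ext i j
    rw [Matrix.diagonal_mul, Matrix.vecMulVec_apply, Matrix.vecMulVec_apply]
    have : (1 - s i) * (d i * α u i * (Pi.single (Fin.natAdd m u) 1 : Fin (m + mt) → ℝ) j)
        = ((1 - s i) * d i) * (α u i * (Pi.single (Fin.natAdd m u) 1 : Fin (m + mt) → ℝ) j) := by ring
    rw [this, hinvmul i, one_mul]
  have e3 : ∀ u, Matrix.vecMulVec (α u) (Pi.single (Fin.natAdd m u) 1) * Matrix.diagonal d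
      = Matrix.vecMulVec (α u) (Pi.single (Fin.natAdd m u) 1) := by
    intro u; ext i j
    rw [Matrix.mul_diagonal, Matrix.vecMulVec_apply]
    by_cases h : j = Fin.natAdd m u
    · subst h; rw [Pi.single_eq_same, hd1 u]; ring
    · rw [Pi.single_eq_of_ne h]; ring
  have e4 : ∀ u v, Matrix.vecMulVec (α u) (Pi.single (Fin.natAdd m u) 1) *
      Matrix.vecMulVec (fun i => d i * α v i) (Pi.single (Fin.natAdd m v) 1) = 0 := by
    intro u v; ext i j
    rw [Matrix.mul_apply, Matrix.zero_apply]
    refine Finset.sum_eq_zero fun k _ => ?_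
    rw [Matrix.vecMulVec_apply, Matrix.vecMulVec_apply]
    by_cases h : k = Fin.natAdd m u
    · subst h
      rw [hαu v _ (by simp)]; ring
    · rw [Pi.single_eq_of_ne h]; ring
  have key : confusion m mt α * M = 1 := by
    rw [confusion, hM]
    have hA : (∑ u, Matrix.vecMulVec (α u) (Pi.single (Fin.natAdd m u) 1)) *
        (∑ v, Matrix.vecMulVec (fun i => d i * α v i) (Pi.single (Fin.natAdd m v) 1)) = 0 := by
      rw [Matrix.sum_mul]
      refine Finset.sum_eq_zero fun u _ => ?_
      rw [Matrix.mul_sum]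
      exact Finset.sum_eq_zero fun v _ => e4 u v
    rw [Matrix.add_mul, Matrix.mul_sub, Matrix.mul_sub, hA, sub_zero, e1,
      Matrix.mul_sum, Finset.sum_congr rfl (fun u _ => e2 u),
      Matrix.sum_mul, Finset.sum_congr rfl (fun u _ => e3 u)]
    abel
  have hinv : (confusion m mt α)⁻¹ = M := Matrix.inv_eq_right_inv key
  -- entries of M
  have hMA : ∀ (i : Fin (m + mt)) (j0 : Fin m),
      M i (Fin.castAdd mt j0) = if i = Fin.castAdd mt j0 then d i else 0 := by
    intro i j0
    rw [hM]
    simp only [Matrix.sub_apply, Matrix.diagonal_apply, Matrix.sum_apply,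
      Matrix.vecMulVec_apply]
    have : ∀ u : Fin mt, d i * α u i * (Pi.single (Fin.natAdd m u) 1 : Fin (m + mt) → ℝ) (Fin.castAdd mt j0) = 0 := by
      intro u
      rw [Pi.single_eq_of_ne, mul_zero]
      simp only [ne_eq, Fin.ext_iff, Fin.coe_castAdd, Fin.coe_natAdd]
      omega
    rw [Finset.sum_congr rfl fun u _ => this u]
    simp
  have hMB : ∀ (i : Fin (m + mt)) (v : Fin mt),
      M i (Fin.natAdd m v) = (if i = Fin.natAdd m v then d i else 0) - d i * α v i := by
    intro i v
    rw [hM]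
    simp only [Matrix.sub_apply, Matrix.diagonal_apply, Matrix.sum_apply,
      Matrix.vecMulVec_apply]
    congr 1
    rw [Finset.sum_eq_single v]
    · rw [Pi.single_eq_same, mul_one]
    · intro u _ hu
      rw [Pi.single_eq_of_ne, mul_zero]
      simp only [ne_eq, Fin.ext_iff, Fin.coe_natAdd]
      omega
    · intro h; exact absurd (Finset.mem_univ v) h
  -- row sums
  have hrow1 : ∀ i0 : Fin m, ∑ j, |M (Fin.castAdd mt i0) j|
      = (1 + s (Fin.castAdd mt i0)) / (1 - s (Fin.castAdd mt i0)) := by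
    intro i0
    set i := Fin.castAdd mt i0 with hi
    rw [Fin.sum_univ_add]
    have h1 : ∑ j0 : Fin m, |M i (Fin.castAdd mt j0)| = d i := by
      have : ∀ j0 : Fin m, |M i (Fin.castAdd mt j0)| = if i0 = j0 then d i else 0 := by
        intro j0
        rw [hMA]
        have hiff : i = Fin.castAdd mt j0 ↔ i0 = j0 := by
          simp [hi, Fin.ext_iff]
        by_cases h : i0 = j0
        · rw [if_pos (hiff.2 h), if_pos h, abs_of_pos (hdpos i)]
        · rw [if_neg (fun hh => h (hiff.1 hh)), if_neg h, abs_zero]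
      rw [Finset.sum_congr rfl fun j0 _ => this j0, Finset.sum_ite_eq]
      simp
    have h2 : ∑ v : Fin mt, |M i (Fin.natAdd m v)| = d i * s i := by
      have : ∀ v : Fin mt, |M i (Fin.natAdd m v)| = d i * α v i := by
        intro v
        have hne : i ≠ Fin.natAdd m v := by
          simp only [hi, ne_eq, Fin.ext_iff, Fin.coe_castAdd, Fin.coe_natAdd]
          omega
        rw [hMB, if_neg hne, zero_sub, abs_neg,
          abs_of_nonneg (mul_nonneg (hdpos i).le (hα0 v i))]
      rw [Finset.sum_congr rfl fun v _ => this v, ← Finset.mul_sum]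
    rw [h1, h2]
    rw [show d i = (1 - s i)⁻¹ from rfl]
    field_simp
  have hrow2 : ∀ v0 : Fin mt, ∑ j, |M (Fin.natAdd m v0) j| = 1 := by
    intro v0
    set i := Fin.natAdd m v0 with hi
    rw [Fin.sum_univ_add]
    have h1 : ∑ j0 : Fin m, |M i (Fin.castAdd mt j0)| = 0 := by
      refine Finset.sum_eq_zero fun j0 _ => ?_
      have hne : i ≠ Fin.castAdd mt j0 := by
        simp only [hi, ne_eq, Fin.ext_iff, Fin.coe_castAdd, Fin.coe_natAdd]
        omega
      rw [hMA, if_neg hne, abs_zero]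
    have h2 : ∑ v : Fin mt, |M i (Fin.natAdd m v)| = 1 := by
      have : ∀ v : Fin mt, |M i (Fin.natAdd m v)| = if v0 = v then 1 else 0 := by
        intro v
        rw [hMB, hαu v i (by simp [hi]), mul_zero, sub_zero]
        have hiff : i = Fin.natAdd m v ↔ v0 = v := by
          simp [hi, Fin.ext_iff]
        by_cases h : v0 = v
        · rw [if_pos (hiff.2 h), if_pos h, hi, hd1 v0, abs_one]
        · rw [if_neg (fun hh => h (hiff.1 hh)), abs_zero, if_neg h]
      rw [Finset.sum_congr rfl fun v _ => this v, Finset.sum_ite_eq]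
      simp
    rw [h1, h2, zero_add]
  -- final sup computation
  rw [hinv, matInfNorm]
  have hgoal : (⨆ i : Fin m, (1 + ∑ u, α u (Fin.castAdd mt i)) / (1 - ∑ u, α u (Fin.castAdd mt i)))
      = ⨆ i0 : Fin m, (1 + s (Fin.castAdd mt i0)) / (1 - s (Fin.castAdd mt i0)) := by
    simp only [hs]
  rw [hgoal]
  set g : Fin m → ℝ := fun i0 => (1 + s (Fin.castAdd mt i0)) / (1 - s (Fin.castAdd mt i0)) with hg
  set f : Fin (m + mt) → ℝ := fun i => ∑ j, |M i j| with hf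
  haveI : Nonempty (Fin m) := ⟨⟨0, hm⟩⟩
  have hbg : BddAbove (Set.range g) := (Set.finite_range g).bddAbove
  have hbf : BddAbove (Set.range f) := (Set.finite_range f).bddAbove
  have hg1 : ∀ i0 : Fin m, (1 : ℝ) ≤ g i0 := by
    intro i0
    show (1 : ℝ) ≤ (1 + s (Fin.castAdd mt i0)) / (1 - s (Fin.castAdd mt i0))
    rw [one_le_div (hpos _)]
    linarith [hs0 (Fin.castAdd mt i0)]
  apply le_antisymm
  · refine ciSup_le fun i => ?_
    rcases lt_or_ge (i : ℕ) m with h | h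
    · obtain ⟨j0, rfl⟩ : ∃ j0 : Fin m, i = Fin.castAdd mt j0 :=
        ⟨⟨(i : ℕ), h⟩, by simp [Fin.ext_iff]⟩
      have hfi : f (Fin.castAdd mt j0) = g j0 := hrow1 j0
      rw [hfi]
      exact le_ciSup hbg _
    · obtain ⟨v0, rfl⟩ : ∃ v0 : Fin mt, i = Fin.natAdd m v0 :=
        ⟨⟨(i : ℕ) - m, by omega⟩, by simp [Fin.ext_iff]; omega⟩
      have hfi : f (Fin.natAdd m v0) = 1 := hrow2 v0
      rw [hfi]
      exact le_trans (hg1 ⟨0, hm⟩) (le_ciSup hbg _)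
  · refine ciSup_le fun i0 => ?_
    have : g i0 = f (Fin.castAdd mt i0) := (hrow1 i0).symm
    rw [this]
    exact le_ciSup hbf _
end

section
/- Under the full-rank condition (Σ_u α_{u,i} < 1 for every class label i), if the class of functions F satisfies Assumption 1, then letting κ'_α = max over class labels i of (1 + Σ_u α_{u,i})/(1 − Σ_u α_{u,i}), the neural network distance between the original distributions is at most κ'_α times that between the corrupted distributions: d_F(P, Q) ≤ κ'_α · d_F(P̃, Q̃). (Theorem 2, upper bound, eq. (7).) -/
/-!
Corruption by a row-stochastic `C` moves onto the discriminator: `E_{P̃}[f] = E_P[C ∘ f]`.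
Write `f ∈ F` as `f₁ + a g + c`. The constant does not contribute to `d`, `C` fixes the
label-free part `a g`, and `f₁ = C ∘ (C⁻¹ ∘ f₁)`. With `κ = ‖C⁻¹‖_∞ ≥ 1` and `σ = ±1` the sign
of `d(f₁)`, the matrix `(σ/κ) C⁻¹` has unit norm, so `f' = (σ/κ) C⁻¹ ∘ f₁ + (a/K) g` lies in `F`
for `K ≥ κ`, and `K d̃(f') = (K/κ) |d(f₁)| + d(a g) ≥ d(f)`.

For the confusion matrix `C = D + A` with `D = diag(𝟙 − Σ_u α_u)` and `A = Σ_u α_u e_uᵀ`: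
`A` only has entries in uncertain columns, whose rows vanish, so `A² = 0` and `A D⁻¹ = A`, giving
`C⁻¹ = D⁻¹ (1 − A)`. Its `i`-th absolute row sum is `(1 + Σ_u α_{u,i}) / (1 − Σ_u α_{u,i})`,
which is `1` on uncertain labels; hence `‖C⁻¹‖_∞ ≤ κ'_α`.
-/

open scoped BigOperators
open MeasureTheory

/-- `(T ∘ f)(x, y) = ∑_ỹ T y ỹ · f (x, ỹ)`. -/
def chanOp {X : Type*} {k : ℕ} (T : Matrix (Fin k) (Fin k) ℝ)
    (f : X × Fin k → ℝ) : X × Fin k → ℝ :=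
  fun z => ∑ j, T z.2 j * f (z.1, j)

/-- Assumption 1: `F = F₁ + F₂ + constants`, where `F₁` is invariant under the action of
matrices of unit `∞`-norm, and `F₂` consists of `[0,1]`-scalings of label-independent
functions from a class `F₂'`. -/
def Assumption1 {X : Type*} {k : ℕ} (F : Set (X × Fin k → ℝ)) : Prop :=
  ∃ F1 F2 : Set (X × Fin k → ℝ),
    F = {f | ∃ f1 ∈ F1, ∃ f2 ∈ F2, ∃ c : ℝ, f = f1 + f2 + Function.const _ c} ∧
    (∀ T : Matrix (Fin k) (Fin k) ℝ, matInfNorm T = 1 → ∀ f ∈ F1, chanOp T f ∈ F1) ∧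
    (∃ F2' : Set (X → ℝ),
      F2 = {h | ∃ g ∈ F2', ∃ a : ℝ, 0 ≤ a ∧ a ≤ 1 ∧ h = fun z => a * g z.1})

/-- Neural network distance w.r.t. a class `F` of discriminators:
`d_F(P, Q) = sup_{f ∈ F} (E_P[f] − E_Q[f])`. -/
noncomputable def nnDist {X : Type*} {k : ℕ} (F : Set (X × Fin k → ℝ))
    (P Q : X × Fin k → ℝ) : ℝ :=
  sSup ((fun f => (∑' z, P z * f z) - ∑' z, Q z * f z) '' F)

open Matrix

section MatInfNorm

variable {k : ℕ}

lemma sum_abs_le_matInfNorm (T : Matrix (Fin k) (Fin k) ℝ) (i : Fin k) :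
    ∑ j, |T i j| ≤ matInfNorm T :=
  le_ciSup (f := fun i => ∑ j, |T i j|) (Finite.bddAbove_range _) i

lemma matInfNorm_smul (c : ℝ) (T : Matrix (Fin k) (Fin k) ℝ) :
    matInfNorm (c • T) = |c| * matInfNorm T := by
  simp only [matInfNorm, Matrix.smul_apply, smul_eq_mul, abs_mul, ← Finset.mul_sum]
  exact (Real.mul_iSup_of_nonneg (abs_nonneg c) _).symm

lemma matInfNorm_of_mem_rowStochastic (hk : 0 < k) {C : Matrix (Fin k) (Fin k) ℝ}
    (hC : C ∈ rowStochastic ℝ (Fin k)) : matInfNorm C = 1 := by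
  have : Nonempty (Fin k) := ⟨⟨0, hk⟩⟩
  simp only [matInfNorm, abs_of_nonneg (nonneg_of_mem_rowStochastic hC),
    sum_row_of_mem_rowStochastic hC, ciSup_const]

lemma one_le_matInfNorm_of_mul_eq_one (hk : 0 < k) {C Ci : Matrix (Fin k) (Fin k) ℝ}
    (hC : C ∈ rowStochastic ℝ (Fin k)) (hCCi : C * Ci = 1) : 1 ≤ matInfNorm Ci := by
  let i : Fin k := ⟨0, hk⟩
  have hentry : ∀ j, Ci j i ≤ matInfNorm Ci := fun j =>
    calc Ci j i ≤ |Ci j i| := le_abs_self _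
      _ ≤ ∑ l, |Ci j l| :=
          Finset.single_le_sum (fun l _ => abs_nonneg (Ci j l)) (Finset.mem_univ i)
      _ ≤ matInfNorm Ci := sum_abs_le_matInfNorm Ci j
  calc (1 : ℝ) = ∑ j, C i j * Ci j i := by rw [← mul_apply, hCCi, one_apply_eq]
    _ ≤ ∑ j, C i j * matInfNorm Ci :=
        Finset.sum_le_sum fun j _ => mul_le_mul_of_nonneg_left (hentry j)
          (nonneg_of_mem_rowStochastic hC)
    _ = matInfNorm Ci := by rw [← Finset.sum_mul, sum_row_of_mem_rowStochastic hC, one_mul]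

end MatInfNorm

section ChanOp

variable {X : Type*} {k : ℕ}

lemma chanOp_mul (C T : Matrix (Fin k) (Fin k) ℝ) (f : X × Fin k → ℝ) :
    chanOp (C * T) f = chanOp C (chanOp T f) := by
  funext z
  simp only [chanOp, mul_apply, Finset.sum_mul, Finset.mul_sum, mul_assoc]
  exact Finset.sum_comm

lemma chanOp_one (f : X × Fin k → ℝ) : chanOp 1 f = f := by
  funext z
  simp [chanOp, one_apply]

lemma chanOp_smul (c : ℝ) (T : Matrix (Fin k) (Fin k) ℝ) (f : X × Fin k → ℝ) :
    chanOp (c • T) f = c • chanOp T f := by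
  funext z
  simp [chanOp, Finset.mul_sum, mul_assoc]

lemma chanOp_add (T : Matrix (Fin k) (Fin k) ℝ) (f g : X × Fin k → ℝ) :
    chanOp T (f + g) = chanOp T f + chanOp T g := by
  funext z
  simp [chanOp, mul_add, Finset.sum_add_distrib]

lemma chanOp_of_mem_rowStochastic {C : Matrix (Fin k) (Fin k) ℝ}
    (hC : C ∈ rowStochastic ℝ (Fin k)) (h : X → ℝ) :
    chanOp C (fun z => h z.1) = fun z => h z.1 := by
  funext z
  simp only [chanOp, ← Finset.sum_mul, sum_row_of_mem_rowStochastic hC, one_mul]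

lemma abs_chanOp_le (T : Matrix (Fin k) (Fin k) ℝ) {f : X × Fin k → ℝ} {B : ℝ}
    (hf : ∀ z, |f z| ≤ B) (z : X × Fin k) : |chanOp T f z| ≤ matInfNorm T * |B| :=
  calc |∑ j, T z.2 j * f (z.1, j)| ≤ ∑ j, |T z.2 j| * |B| :=
        (Finset.abs_sum_le_sum_abs _ _).trans <| Finset.sum_le_sum fun j _ => by
          rw [abs_mul]
          exact mul_le_mul_of_nonneg_left ((hf _).trans (le_abs_self B)) (abs_nonneg _)
    _ ≤ matInfNorm T * |B| := by
        rw [← Finset.sum_mul]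
        exact mul_le_mul_of_nonneg_right (sum_abs_le_matInfNorm T z.2) (abs_nonneg B)

lemma chanOp_add_add_const {C : Matrix (Fin k) (Fin k) ℝ} (hC : C ∈ rowStochastic ℝ (Fin k))
    (f : X × Fin k → ℝ) (h : X → ℝ) (c : ℝ) :
    chanOp C (f + (fun z => h z.1) + Function.const _ c) =
      chanOp C f + (fun z => h z.1) + Function.const _ c := by
  rw [chanOp_add, chanOp_add, chanOp_of_mem_rowStochastic hC h]
  exact congrArg _ (chanOp_of_mem_rowStochastic hC fun _ => c)

end ChanOp

section PmfGap

variable {Z : Type*}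

noncomputable def pmfGap (P Q f : Z → ℝ) : ℝ :=
  ∑' z, P z * f z - ∑' z, Q z * f z

lemma summable_mul_of_abs_le {R f : Z → ℝ} (hR : Summable R) (hR0 : ∀ z, 0 ≤ R z) {B : ℝ}
    (hf : ∀ z, |f z| ≤ B) : Summable fun z => R z * f z :=
  (hR.mul_right B).of_norm_bounded fun z => by
    rw [Real.norm_eq_abs, abs_mul, abs_of_nonneg (hR0 z)]
    exact mul_le_mul_of_nonneg_left (hf z) (hR0 z)

lemma abs_smul_apply_le {f : Z → ℝ} {B : ℝ} (hf : ∀ z, |f z| ≤ B) (c : ℝ) (z : Z) :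
    |(c • f) z| ≤ |c| * B := by
  rw [Pi.smul_apply, smul_eq_mul, abs_mul]
  exact mul_le_mul_of_nonneg_left (hf z) (abs_nonneg c)

variable {P Q : Z → ℝ}

lemma pmfGap_smul (c : ℝ) (f : Z → ℝ) : pmfGap P Q (c • f) = c * pmfGap P Q f := by
  simp only [pmfGap, Pi.smul_apply, smul_eq_mul, mul_left_comm _ c, tsum_mul_left]
  ring

lemma pmfGap_add (hP : IsPMF P) (hQ : IsPMF Q) {f g : Z → ℝ} {B₁ B₂ : ℝ}
    (hf : ∀ z, |f z| ≤ B₁) (hg : ∀ z, |g z| ≤ B₂) :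
    pmfGap P Q (f + g) = pmfGap P Q f + pmfGap P Q g := by
  simp only [pmfGap, Pi.add_apply, mul_add]
  rw [(summable_mul_of_abs_le hP.2.1 hP.1 hf).tsum_add (summable_mul_of_abs_le hP.2.1 hP.1 hg),
    (summable_mul_of_abs_le hQ.2.1 hQ.1 hf).tsum_add (summable_mul_of_abs_le hQ.2.1 hQ.1 hg)]
  ring

lemma pmfGap_const (hP : IsPMF P) (hQ : IsPMF Q) (c : ℝ) :
    pmfGap P Q (Function.const Z c) = 0 := by
  simp only [pmfGap, Function.const_apply, tsum_mul_right, hP.2.2, hQ.2.2, sub_self]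

lemma pmfGap_add_add_const (hP : IsPMF P) (hQ : IsPMF Q) {f g : Z → ℝ} {B₁ B₂ : ℝ}
    (hf : ∀ z, |f z| ≤ B₁) (hg : ∀ z, |g z| ≤ B₂) (c : ℝ) :
    pmfGap P Q (f + g + Function.const Z c) = pmfGap P Q f + pmfGap P Q g := by
  have hfg : ∀ z, |(f + g) z| ≤ B₁ + B₂ := fun z =>
    (abs_add_le _ _).trans (add_le_add (hf z) (hg z))
  rw [pmfGap_add hP hQ hfg (g := Function.const Z c) (fun _ => le_refl |c|),
    pmfGap_add hP hQ hf hg, pmfGap_const hP hQ, add_zero]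

end PmfGap

section Corrupt

variable {X : Type*} {k : ℕ} {C : Matrix (Fin k) (Fin k) ℝ}

lemma summable_corrupt_s7 {R : X × Fin k → ℝ} (hR : Summable R) (hR0 : ∀ z, 0 ≤ R z)
    (hC0 : ∀ i j, 0 ≤ C i j) : Summable (corrupt R C) :=
  summable_sum fun j _ =>
    (hR.comp_injective (Prod.mk_left_injective j)).mul_of_nonneg (Summable.of_finite (f := C j))
      (fun x => hR0 (x, j)) (hC0 j)

lemma tsum_corrupt_mul {R : X × Fin k → ℝ} (hR : Summable R) (hR0 : ∀ z, 0 ≤ R z)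
    (hC0 : ∀ i j, 0 ≤ C i j) {f : X × Fin k → ℝ} {B : ℝ} (hf : ∀ z, |f z| ≤ B) :
    ∑' z, corrupt R C z * f z = ∑' z, R z * chanOp C f z := by
  have hcorrupt0 : ∀ z, 0 ≤ corrupt R C z := fun z =>
    Finset.sum_nonneg fun j _ => mul_nonneg (hR0 _) (hC0 _ _)
  rw [(summable_mul_of_abs_le (summable_corrupt_s7 hR hR0 hC0) hcorrupt0 hf).tsum_prod,
    (summable_mul_of_abs_le hR hR0 (abs_chanOp_le C hf)).tsum_prod]
  refine tsum_congr fun x => ?_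
  simp only [tsum_fintype, corrupt, chanOp, Finset.sum_mul, Finset.mul_sum, mul_assoc]
  exact Finset.sum_comm

lemma pmfGap_corrupt {P Q : X × Fin k → ℝ} (hP : IsPMF P) (hQ : IsPMF Q)
    (hC : C ∈ rowStochastic ℝ (Fin k)) {f : X × Fin k → ℝ} {B : ℝ} (hf : ∀ z, |f z| ≤ B) :
    pmfGap (corrupt P C) (corrupt Q C) f = pmfGap P Q (chanOp C f) := by
  have hC0 : ∀ i j, 0 ≤ C i j := fun _ _ => nonneg_of_mem_rowStochastic hC
  simp only [pmfGap, tsum_corrupt_mul hP.2.1 hP.1 hC0 hf, tsum_corrupt_mul hQ.2.1 hQ.1 hC0 hf]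

end Corrupt

lemma Real.sSup_le_mul_sSup_of_subset {S T : Set ℝ} {K : ℝ} (hK : 0 ≤ K) (hT : 0 ≤ sSup T)
    (hTS : T ⊆ S) (hST : ∀ s ∈ S, ∃ t ∈ T, s ≤ K * t) : sSup S ≤ K * sSup T := by
  by_cases hS : BddAbove S
  · refine Real.sSup_le (fun s hs => ?_) (mul_nonneg hK hT)
    obtain ⟨t, ht, hst⟩ := hST s hs
    exact hst.trans (mul_le_mul_of_nonneg_left (le_csSup (hS.mono hTS) ht) hK)
  · rw [Real.sSup_of_not_bddAbove hS]
    exact mul_nonneg hK hT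

section SumClass

variable {X : Type*} {k : ℕ} {F1 : Set (X × Fin k → ℝ)} {F2' : Set (X → ℝ)}

def ChanOpInvariant (F1 : Set (X × Fin k → ℝ)) : Prop :=
  ∀ T : Matrix (Fin k) (Fin k) ℝ, matInfNorm T = 1 → ∀ f ∈ F1, chanOp T f ∈ F1

def sumClass (F1 : Set (X × Fin k → ℝ)) (F2' : Set (X → ℝ)) : Set (X × Fin k → ℝ) :=
  {f | ∃ f1 ∈ F1, ∃ g ∈ F2', ∃ a ∈ Set.Icc (0 : ℝ) 1, ∃ c : ℝ,
    f = f1 + (fun z => a * g z.1) + Function.const _ c}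

lemma Assumption1.exists_eq_sumClass {F : Set (X × Fin k → ℝ)} (hF : Assumption1 F) :
    ∃ (F1 : Set (X × Fin k → ℝ)) (F2' : Set (X → ℝ)),
      ChanOpInvariant F1 ∧ F = sumClass F1 F2' := by
  obtain ⟨F1, _, rfl, hF1, F2', rfl⟩ := hF
  refine ⟨F1, F2', hF1, Set.ext fun f => ⟨?_, ?_⟩⟩
  · rintro ⟨f1, hf1, _, ⟨g, hg, a, ha0, ha1, rfl⟩, c, rfl⟩
    exact ⟨f1, hf1, g, hg, a, ⟨ha0, ha1⟩, c, rfl⟩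
  · rintro ⟨f1, hf1, g, hg, a, ⟨ha0, ha1⟩, c, rfl⟩
    exact ⟨f1, hf1, _, ⟨g, hg, a, ha0, ha1, rfl⟩, c, rfl⟩

lemma mem_sumClass_of_mem_left {f1 : X × Fin k → ℝ} (hf1 : f1 ∈ F1) {g : X → ℝ} (hg : g ∈ F2') :
    f1 ∈ sumClass F1 F2' :=
  ⟨f1, hf1, g, hg, 0, ⟨le_rfl, zero_le_one⟩, 0, by funext z; simp⟩

lemma exists_abs_le_of_mem_sumClass (hFbd : ∀ f ∈ sumClass F1 F2', ∃ B : ℝ, ∀ z, |f z| ≤ B)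
    {f1 : X × Fin k → ℝ} (hf1 : f1 ∈ F1) {g : X → ℝ} (hg : g ∈ F2') {a : ℝ}
    (ha : a ∈ Set.Icc (0 : ℝ) 1) :
    (∃ B : ℝ, ∀ z, |f1 z| ≤ B) ∧ ∃ B : ℝ, ∀ z : X × Fin k, |a * g z.1| ≤ B := by
  obtain ⟨B₁, hB₁⟩ := hFbd f1 (mem_sumClass_of_mem_left hf1 hg)
  obtain ⟨B, hB⟩ := hFbd _ ⟨f1, hf1, g, hg, a, ha, 0, rfl⟩
  refine ⟨⟨B₁, hB₁⟩, B + B₁, fun z => ?_⟩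
  have h := abs_sub (f1 z + a * g z.1 + 0) (f1 z)
  simp only [add_zero, add_sub_cancel_left] at h
  exact h.trans (add_le_add (by simpa using hB z) (hB₁ z))

lemma chanOp_mem_sumClass (hk : 0 < k) (hF1 : ChanOpInvariant F1)
    {C : Matrix (Fin k) (Fin k) ℝ} (hC : C ∈ rowStochastic ℝ (Fin k)) {f : X × Fin k → ℝ}
    (hf : f ∈ sumClass F1 F2') : chanOp C f ∈ sumClass F1 F2' := by
  obtain ⟨f1, hf1, g, hg, a, ha, c, rfl⟩ := hf
  exact ⟨chanOp C f1, hF1 C (matInfNorm_of_mem_rowStochastic hk hC) f1 hf1, g, hg, a, ha, c,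
    chanOp_add_add_const hC f1 (fun x => a * g x) c⟩

lemma nnDist_sumClass_nonneg (hk : 0 < k) (hF1 : ChanOpInvariant F1)
    (P Q : X × Fin k → ℝ) : 0 ≤ nnDist (sumClass F1 F2') P Q := by
  rcases (sumClass F1 F2').eq_empty_or_nonempty with hF | ⟨_, f1, hf1, g, hg, -⟩
  · simp [nnDist, hF]
  have hneg : matInfNorm ((-1 : ℝ) • (1 : Matrix (Fin k) (Fin k) ℝ)) = 1 := by
    rw [matInfNorm_smul, matInfNorm_of_mem_rowStochastic hk (one_mem _), abs_neg, abs_one, one_mul]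
  have hnegf1 : chanOp ((-1 : ℝ) • 1) f1 = (-1 : ℝ) • f1 := by rw [chanOp_smul, chanOp_one]
  apply Real.sSup_nonneg'
  rcases le_total 0 (pmfGap P Q f1) with h | h
  · exact ⟨_, ⟨f1, mem_sumClass_of_mem_left hf1 hg, rfl⟩, h⟩
  · refine ⟨_, ⟨_, mem_sumClass_of_mem_left (hF1 _ hneg f1 hf1) hg, rfl⟩, ?_⟩
    change 0 ≤ pmfGap P Q _
    rw [hnegf1, pmfGap_smul]
    linarith

end SumClass

section Corruption

variable {X : Type*} {k : ℕ} {C Ci : Matrix (Fin k) (Fin k) ℝ} {K : ℝ} {P Q : X × Fin k → ℝ}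
  {F1 : Set (X × Fin k → ℝ)} {F2' : Set (X → ℝ)}

lemma pmfGap_corrupt_add_add_const (hP : IsPMF P) (hQ : IsPMF Q)
    (hC : C ∈ rowStochastic ℝ (Fin k)) {f : X × Fin k → ℝ} {h : X → ℝ} {B₁ B₂ : ℝ}
    (hf : ∀ z, |f z| ≤ B₁) (hh : ∀ z : X × Fin k, |h z.1| ≤ B₂) (c : ℝ) :
    pmfGap (corrupt P C) (corrupt Q C) (f + (fun z => h z.1) + Function.const _ c) =
      pmfGap P Q (chanOp C f) + pmfGap P Q (fun z => h z.1) := by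
  have hsum : ∀ z : X × Fin k,
      |(f + (fun z => h z.1) + Function.const _ c : X × Fin k → ℝ) z| ≤ B₁ + B₂ + |c| :=
    fun z => (abs_add_le _ _).trans
      (add_le_add ((abs_add_le _ _).trans (add_le_add (hf z) (hh z))) le_rfl)
  rw [pmfGap_corrupt hP hQ hC hsum, chanOp_add_add_const hC,
    pmfGap_add_add_const hP hQ (abs_chanOp_le C hf) hh]

lemma pmfGap_corrupt_chanOp_smul_add (hP : IsPMF P) (hQ : IsPMF Q)
    (hC : C ∈ rowStochastic ℝ (Fin k)) (hCCi : C * Ci = 1) (t b : ℝ) {f : X × Fin k → ℝ}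
    {g : X → ℝ} {a B₁ B₂ c : ℝ} (hf : ∀ z, |f z| ≤ B₁) (hg : ∀ z : X × Fin k, |a * g z.1| ≤ B₂) :
    pmfGap (corrupt P C) (corrupt Q C)
        (chanOp (t • Ci) f + (fun z => b * a * g z.1) + Function.const _ c) =
      t * pmfGap P Q f + b * pmfGap P Q (fun z => a * g z.1) := by
  have hbg : (fun z : X × Fin k => b * a * g z.1) = b • fun z => a * g z.1 := by
    funext z
    simp [mul_assoc]
  have hbound : ∀ z : X × Fin k, |b * a * g z.1| ≤ |b| * B₂ := fun z => by
    rw [mul_assoc, abs_mul]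
    exact mul_le_mul_of_nonneg_left (hg z) (abs_nonneg _)
  rw [pmfGap_corrupt_add_add_const hP hQ hC (h := fun x => b * a * g x) (abs_chanOp_le _ hf)
      hbound, ← chanOp_mul, Matrix.mul_smul, hCCi, chanOp_smul, chanOp_one, hbg, pmfGap_smul,
    pmfGap_smul]

lemma exists_pmfGap_le_mul_pmfGap_corrupt (hk : 0 < k) (hF1 : ChanOpInvariant F1)
    (hFbd : ∀ f ∈ sumClass F1 F2', ∃ B : ℝ, ∀ z, |f z| ≤ B)
    (hC : C ∈ rowStochastic ℝ (Fin k)) (hCCi : C * Ci = 1) (hK : matInfNorm Ci ≤ K)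
    (hP : IsPMF P) (hQ : IsPMF Q) {f : X × Fin k → ℝ} (hf : f ∈ sumClass F1 F2') :
    ∃ g ∈ sumClass F1 F2', pmfGap P Q f ≤ K * pmfGap (corrupt P C) (corrupt Q C) g := by
  obtain ⟨f1, hf1, g, hg, a, ha, c, rfl⟩ := hf
  obtain ⟨⟨B₁, hB₁⟩, ⟨B₂, hB₂⟩⟩ := exists_abs_le_of_mem_sumClass hFbd hf1 hg ha
  set κ := matInfNorm Ci
  have hκ : 1 ≤ κ := one_le_matInfNorm_of_mul_eq_one hk hC hCCi
  have hK0 : 0 < K := by linarith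
  obtain ⟨σ, hσ, hσf1⟩ : ∃ σ : ℝ, |σ| = 1 ∧ σ * pmfGap P Q f1 = |pmfGap P Q f1| := by
    rcases abs_choice (pmfGap P Q f1) with h | h
    exacts [⟨1, abs_one, by rw [h, one_mul]⟩, ⟨-1, by simp, by rw [h, neg_one_mul]⟩]
  have hT : matInfNorm ((σ * κ⁻¹) • Ci) = 1 := by
    rw [matInfNorm_smul, abs_mul, hσ, abs_inv, abs_of_pos (by linarith), one_mul,
      inv_mul_cancel₀ (by linarith)]
  have haK : K⁻¹ * a ∈ Set.Icc (0 : ℝ) 1 :=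
    ⟨mul_nonneg (inv_nonneg.2 hK0.le) ha.1,
      mul_le_one₀ (inv_le_one_of_one_le₀ (hκ.trans hK)) ha.1 ha.2⟩
  have hDf' := pmfGap_corrupt_chanOp_smul_add hP hQ hC hCCi (σ * κ⁻¹) K⁻¹ hB₁ hB₂ (c := 0)
  have hKκ : 1 ≤ K * κ⁻¹ := by rw [← div_eq_mul_inv, one_le_div₀ (by linarith)]; exact hK
  refine ⟨_, ⟨_, hF1 _ hT f1 hf1, g, hg, K⁻¹ * a, haK, 0, rfl⟩, ?_⟩
  rw [pmfGap_add_add_const hP hQ hB₁ hB₂, hDf']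
  calc pmfGap P Q f1 + pmfGap P Q (fun z => a * g z.1)
      ≤ K * κ⁻¹ * |pmfGap P Q f1| + pmfGap P Q (fun z => a * g z.1) := by
        gcongr
        exact (le_abs_self _).trans (le_mul_of_one_le_left (abs_nonneg _) hKκ)
    _ = K * (σ * κ⁻¹ * pmfGap P Q f1 + K⁻¹ * pmfGap P Q (fun z => a * g z.1)) := by
        rw [← hσf1, mul_add, ← mul_assoc K K⁻¹, mul_inv_cancel₀ hK0.ne', one_mul]
        ring

theorem nnDist_le_mul_nnDist_corrupt (hk : 0 < k) (hC : C ∈ rowStochastic ℝ (Fin k))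
    (hCCi : C * Ci = 1) (hK : matInfNorm Ci ≤ K) (hP : IsPMF P) (hQ : IsPMF Q)
    {F : Set (X × Fin k → ℝ)} (hFbd : ∀ f ∈ F, ∃ B : ℝ, ∀ z, |f z| ≤ B) (hF : Assumption1 F) :
    nnDist F P Q ≤ K * nnDist F (corrupt P C) (corrupt Q C) := by
  obtain ⟨F1, F2', hF1, rfl⟩ := hF.exists_eq_sumClass
  refine Real.sSup_le_mul_sSup_of_subset (zero_le_one.trans
    ((one_le_matInfNorm_of_mul_eq_one hk hC hCCi).trans hK)) (nnDist_sumClass_nonneg hk hF1 _ _)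
    ?_ ?_
  · rintro _ ⟨f, hf, rfl⟩
    obtain ⟨B, hB⟩ := hFbd f hf
    exact ⟨chanOp C f, chanOp_mem_sumClass hk hF1 hC hf, (pmfGap_corrupt hP hQ hC hB).symm⟩
  · rintro _ ⟨f, hf, rfl⟩
    obtain ⟨g, hg, hfg⟩ := exists_pmfGap_le_mul_pmfGap_corrupt hk hF1 hFbd hC hCCi hK hP hQ hf
    exact ⟨_, ⟨g, hg, rfl⟩, hfg⟩

end Corruption

section Confusion

variable {m mt : ℕ} {α : Fin mt → Fin (m + mt) → ℝ}

def uncertainPart (m mt : ℕ) (α : Fin mt → Fin (m + mt) → ℝ) :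
    Matrix (Fin (m + mt)) (Fin (m + mt)) ℝ :=
  ∑ u, vecMulVec (α u) (Pi.single (Fin.natAdd m u) 1)

noncomputable def confusionInv (m mt : ℕ) (α : Fin mt → Fin (m + mt) → ℝ) :
    Matrix (Fin (m + mt)) (Fin (m + mt)) ℝ :=
  diagonal (fun i => (1 - ∑ u, α u i)⁻¹) * (1 - uncertainPart m mt α)

lemma confusion_eq_diagonal_add_uncertainPart :
    confusion m mt α = diagonal (fun i => 1 - ∑ u, α u i) + uncertainPart m mt α :=
  rfl

lemma uncertainPart_apply (i j : Fin (m + mt)) :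
    uncertainPart m mt α i j =
      ∑ u, α u i * (Pi.single (Fin.natAdd m u) 1 : Fin (m + mt) → ℝ) j := by
  simp [uncertainPart, Matrix.sum_apply, vecMulVec_apply]

lemma uncertainPart_apply_of_lt (i : Fin (m + mt)) {j : Fin (m + mt)} (hj : (j : ℕ) < m) :
    uncertainPart m mt α i j = 0 := by
  rw [uncertainPart_apply]
  refine Finset.sum_eq_zero fun u _ => ?_
  rw [Pi.single_apply, if_neg fun h => by simp [h] at hj, mul_zero]

lemma uncertainPart_apply_of_le (hαu : ∀ u (i : Fin (m + mt)), m ≤ (i : ℕ) → α u i = 0)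
    {i : Fin (m + mt)} (hi : m ≤ (i : ℕ)) (j : Fin (m + mt)) : uncertainPart m mt α i j = 0 := by
  simp [uncertainPart_apply, hαu _ i hi]

lemma uncertainPart_nonneg (hα0 : ∀ u i, 0 ≤ α u i) (i j : Fin (m + mt)) :
    0 ≤ uncertainPart m mt α i j := by
  rw [uncertainPart_apply]
  exact Finset.sum_nonneg fun u _ => mul_nonneg (hα0 u i) (by rw [Pi.single_apply]; positivity)

lemma sum_uncertainPart (i : Fin (m + mt)) : ∑ j, uncertainPart m mt α i j = ∑ u, α u i := by
  simp only [uncertainPart_apply]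
  rw [Finset.sum_comm]
  simp [← Finset.mul_sum, Finset.sum_pi_single']

lemma uncertainPart_mul_self (hαu : ∀ u (i : Fin (m + mt)), m ≤ (i : ℕ) → α u i = 0) :
    uncertainPart m mt α * uncertainPart m mt α = 0 := by
  ext i l
  rw [mul_apply, Matrix.zero_apply]
  refine Finset.sum_eq_zero fun j _ => ?_
  rcases lt_or_ge (j : ℕ) m with hj | hj
  · rw [uncertainPart_apply_of_lt i hj, zero_mul]
  · rw [uncertainPart_apply_of_le hαu hj, mul_zero]

lemma uncertainPart_mul_diagonal {d : Fin (m + mt) → ℝ}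
    (hd : ∀ j : Fin (m + mt), m ≤ (j : ℕ) → d j = 1) :
    uncertainPart m mt α * diagonal d = uncertainPart m mt α := by
  ext i j
  rw [mul_diagonal]
  rcases lt_or_ge (j : ℕ) m with hj | hj
  · rw [uncertainPart_apply_of_lt i hj, zero_mul]
  · rw [hd j hj, mul_one]

lemma sum_alpha_eq_zero (hαu : ∀ u (i : Fin (m + mt)), m ≤ (i : ℕ) → α u i = 0)
    {i : Fin (m + mt)} (hi : m ≤ (i : ℕ)) : ∑ u, α u i = 0 :=
  Finset.sum_eq_zero fun u _ => hαu u i hi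

lemma sum_alpha_lt_one (hαu : ∀ u (i : Fin (m + mt)), m ≤ (i : ℕ) → α u i = 0)
    (hfull : ∀ i : Fin (m + mt), (i : ℕ) < m → ∑ u, α u i < 1) (i : Fin (m + mt)) :
    ∑ u, α u i < 1 := by
  rcases lt_or_ge (i : ℕ) m with hi | hi
  · exact hfull i hi
  · rw [sum_alpha_eq_zero hαu hi]
    exact zero_lt_one

lemma confusion_mem_rowStochastic (hα0 : ∀ u i, 0 ≤ α u i)
    (hαu : ∀ u (i : Fin (m + mt)), m ≤ (i : ℕ) → α u i = 0)
    (hfull : ∀ i : Fin (m + mt), (i : ℕ) < m → ∑ u, α u i < 1) :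
    confusion m mt α ∈ rowStochastic ℝ (Fin (m + mt)) := by
  rw [mem_rowStochastic_iff_sum, confusion_eq_diagonal_add_uncertainPart]
  refine ⟨fun i j => add_nonneg ?_ (uncertainPart_nonneg hα0 i j), fun i => ?_⟩
  · rw [diagonal_apply]
    split_ifs
    exacts [by linarith [sum_alpha_lt_one hαu hfull i], le_rfl]
  · simp [Finset.sum_add_distrib, diagonal_apply, sum_uncertainPart]

lemma confusion_mul_confusionInv (hαu : ∀ u (i : Fin (m + mt)), m ≤ (i : ℕ) → α u i = 0)
    (hfull : ∀ i : Fin (m + mt), (i : ℕ) < m → ∑ u, α u i < 1) :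
    confusion m mt α * confusionInv m mt α = 1 := by
  have hD : diagonal (fun i => 1 - ∑ u, α u i) * diagonal (fun i => (1 - ∑ u, α u i)⁻¹) = 1 := by
    rw [diagonal_mul_diagonal, ← diagonal_one]
    exact congrArg diagonal (funext fun i =>
      mul_inv_cancel₀ (sub_ne_zero.2 (sum_alpha_lt_one hαu hfull i).ne'))
  have hAD :
      uncertainPart m mt α * diagonal (fun i => (1 - ∑ u, α u i)⁻¹) = uncertainPart m mt α :=
    uncertainPart_mul_diagonal fun j hj => by simp [sum_alpha_eq_zero hαu hj]
  -- `(D + A) D⁻¹ (1 − A) = (1 + A)(1 − A) = 1 − A²`, and `A² = 0`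
  rw [confusion_eq_diagonal_add_uncertainPart, confusionInv, ← Matrix.mul_assoc, Matrix.add_mul,
    hD, hAD, Matrix.add_mul, Matrix.mul_sub, Matrix.mul_sub, uncertainPart_mul_self hαu]
  simp

lemma sum_abs_confusionInv (hα0 : ∀ u i, 0 ≤ α u i)
    (hαu : ∀ u (i : Fin (m + mt)), m ≤ (i : ℕ) → α u i = 0)
    (hfull : ∀ i : Fin (m + mt), (i : ℕ) < m → ∑ u, α u i < 1) (i : Fin (m + mt)) :
    ∑ j, |confusionInv m mt α i j| = (1 + ∑ u, α u i) / (1 - ∑ u, α u i) := by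
  have hAii : uncertainPart m mt α i i = 0 := by
    rcases lt_or_ge (i : ℕ) m with hi | hi
    exacts [uncertainPart_apply_of_lt i hi, uncertainPart_apply_of_le hαu hi i]
  have habs : ∀ j, |(1 - uncertainPart m mt α) i j| =
      (1 : Matrix _ _ ℝ) i j + uncertainPart m mt α i j := by
    intro j
    rcases eq_or_ne i j with rfl | hij
    · simp [hAii]
    · simp [one_apply_ne hij, abs_of_nonneg (uncertainPart_nonneg hα0 i j)]
  have hpos : 0 < 1 - ∑ u, α u i := sub_pos.2 (sum_alpha_lt_one hαu hfull i)
  simp only [confusionInv, diagonal_mul, abs_mul, habs, ← Finset.mul_sum, Finset.sum_add_distrib,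
    sum_uncertainPart, abs_inv, abs_of_pos hpos]
  simp [div_eq_inv_mul, one_apply]

lemma matInfNorm_confusionInv_le (hm : 0 < m) (hα0 : ∀ u i, 0 ≤ α u i)
    (hαu : ∀ u (i : Fin (m + mt)), m ≤ (i : ℕ) → α u i = 0)
    (hfull : ∀ i : Fin (m + mt), (i : ℕ) < m → ∑ u, α u i < 1) :
    matInfNorm (confusionInv m mt α) ≤
      ⨆ i : Fin m, (1 + ∑ u, α u (Fin.castAdd mt i)) / (1 - ∑ u, α u (Fin.castAdd mt i)) := by
  have : Nonempty (Fin (m + mt)) := ⟨⟨0, by omega⟩⟩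
  have hbdd := Finite.bddAbove_range fun i : Fin m =>
    (1 + ∑ u, α u (Fin.castAdd mt i)) / (1 - ∑ u, α u (Fin.castAdd mt i))
  refine ciSup_le fun i => ?_
  rw [sum_abs_confusionInv hα0 hαu hfull]
  rcases lt_or_ge (i : ℕ) m with hi | hi
  · exact le_ciSup_of_le hbdd (i.castLT hi) (by rw [Fin.castAdd_castLT])
  · let i₀ : Fin (m + mt) := Fin.castAdd mt ⟨0, hm⟩
    have hs : ∑ u, α u i₀ < 1 := sum_alpha_lt_one hαu hfull i₀
    refine le_ciSup_of_le hbdd ⟨0, hm⟩ ?_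
    rw [sum_alpha_eq_zero hαu hi, add_zero, sub_zero, div_one, one_le_div₀ (by linarith)]
    linarith [Finset.sum_nonneg fun u (_ : u ∈ Finset.univ) => hα0 u i₀]

end Confusion

theorem nnDist_original_le_kappa_mul_nnDist_corrupted_general {X : Type*} {m mt : ℕ} (hm : 0 < m)
    (α : Fin mt → Fin (m + mt) → ℝ)
    (hα0 : ∀ u i, 0 ≤ α u i)
    (hαu : ∀ (u : Fin mt) (i : Fin (m + mt)), m ≤ (i : ℕ) → α u i = 0)
    (hfull : ∀ i : Fin (m + mt), (i : ℕ) < m → ∑ u, α u i < 1)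
    (P Q : X × Fin (m + mt) → ℝ) (hP : IsPMF P) (hQ : IsPMF Q)
    (F : Set (X × Fin (m + mt) → ℝ))
    (hFbd : ∀ f ∈ F, ∃ B : ℝ, ∀ z, |f z| ≤ B)
    (hF : Assumption1 F) :
    nnDist F P Q ≤
      (⨆ i : Fin m, (1 + ∑ u, α u (Fin.castAdd mt i)) / (1 - ∑ u, α u (Fin.castAdd mt i))) *
        nnDist F (corrupt P (confusion m mt α)) (corrupt Q (confusion m mt α)) :=
  nnDist_le_mul_nnDist_corrupt (by omega) (confusion_mem_rowStochastic hα0 hαu hfull)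
    (confusion_mul_confusionInv hαu hfull) (matInfNorm_confusionInv_le hm hα0 hαu hfull) hP hQ
    hFbd hF

theorem nnDist_original_le_kappa_mul_nnDist_corrupted {X : Type*} [Countable X] {m mt : ℕ} (hm : 0 < m) (hmt : 0 < mt)
    (α : Fin mt → Fin (m + mt) → ℝ)
    (hα0 : ∀ u i, 0 ≤ α u i) (hα1 : ∀ u i, α u i ≤ 1)
    (hαu : ∀ (u : Fin mt) (i : Fin (m + mt)), m ≤ (i : ℕ) → α u i = 0)
    (hfull : ∀ i : Fin (m + mt), (i : ℕ) < m → ∑ u, α u i < 1)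
    (P Q : X × Fin (m + mt) → ℝ) (hP : IsPMF P) (hQ : IsPMF Q)
    (hPz : ∀ (x : X) (y : Fin (m + mt)), m ≤ (y : ℕ) → P (x, y) = 0)
    (hQz : ∀ (x : X) (y : Fin (m + mt)), m ≤ (y : ℕ) → Q (x, y) = 0)
    (F : Set (X × Fin (m + mt) → ℝ))
    (hFbd : ∀ f ∈ F, ∃ B : ℝ, ∀ z, |f z| ≤ B)
    (hF : Assumption1 F) :
    nnDist F P Q ≤
      (⨆ i : Fin m, (1 + ∑ u, α u (Fin.castAdd mt i)) / (1 - ∑ u, α u (Fin.castAdd mt i))) *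
        nnDist F (corrupt P (confusion m mt α)) (corrupt Q (confusion m mt α)) :=
  nnDist_original_le_kappa_mul_nnDist_corrupted_general hm α hα0 hαu hfull P Q hP hQ F hFbd hF
end

section
/- In the missing-labels model with ᾱ = max_{y<m} α^{(y)} < 1, the total variation distance satisfies d_TV(P, Q) ≤ (1/(1 − ᾱ)) · d_TV(P̃, Q̃). (Corollary 1, eq. (10).) -/
open scoped BigOperators
open MeasureTheory

/-- The missing-labels parameter vector on `Fin (m+1)`: `α^{(y)}` on class labels, `0` on
the missing-label symbol `m`. -/
noncomputable def missAlpha (m : ℕ) (αv : Fin m → ℝ) : Fin (m + 1) → ℝ :=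
  fun i => if h : (i : ℕ) < m then αv ⟨i, h⟩ else 0

/-- Confusion matrix of the missing-labels model:
`C = diag(𝟙 − α_m) + α_m e_m^T`. -/
noncomputable def missConfusion (m : ℕ) (αv : Fin m → ℝ) :
    Matrix (Fin (m + 1)) (Fin (m + 1)) ℝ :=
  Matrix.diagonal (fun i => 1 - missAlpha m αv i) +
    Matrix.vecMulVec (missAlpha m αv) (Pi.single (Fin.last m) 1)

/-- Entrywise value of the confusion matrix at a non-missing column. -/
lemma missConfusion_apply_ne_last {m : ℕ} (αv : Fin m → ℝ) (j i : Fin (m + 1))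
    (hi : i ≠ Fin.last m) :
    missConfusion m αv j i = if j = i then 1 - missAlpha m αv i else 0 := by
  simp only [missConfusion, Matrix.add_apply, Matrix.diagonal_apply, Matrix.vecMulVec_apply,
    Pi.single_apply, if_neg hi, mul_zero, add_zero]
  split <;> simp_all

/-- `corrupt` at a non-missing label. -/
lemma corrupt_apply_ne_last {X : Type*} {m : ℕ} (αv : Fin m → ℝ) (P : X × Fin (m + 1) → ℝ)
    (x : X) (i : Fin (m + 1)) (hi : i ≠ Fin.last m) :
    corrupt P (missConfusion m αv) (x, i) = P (x, i) * (1 - missAlpha m αv i) := by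
  simp only [corrupt]
  rw [Finset.sum_eq_single i]
  · rw [missConfusion_apply_ne_last αv i i hi, if_pos rfl]
  · intro j _ hj
    rw [missConfusion_apply_ne_last αv j i hi, if_neg hj, mul_zero]
  · simp

lemma missConfusion_nonneg {m : ℕ} (αv : Fin m → ℝ) (h0 : ∀ y, 0 ≤ αv y)
    (h1 : ∀ y, αv y ≤ 1) (j i : Fin (m + 1)) : 0 ≤ missConfusion m αv j i := by
  have hA : ∀ k : Fin (m + 1), 0 ≤ missAlpha m αv k := by
    intro k; unfold missAlpha; split
    · exact h0 _
    · exact le_refl 0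
  have hA1 : ∀ k : Fin (m + 1), missAlpha m αv k ≤ 1 := by
    intro k; unfold missAlpha; split
    · exact h1 _
    · norm_num
  simp only [missConfusion, Matrix.add_apply, Matrix.diagonal_apply, Matrix.vecMulVec_apply,
    Pi.single_apply]
  have : (0:ℝ) ≤ missAlpha m αv j * if i = Fin.last m then 1 else 0 := by
    split <;> simp [hA j]
  split
  · linarith [hA1 j]
  · linarith

lemma corrupt_summable {X : Type*} [Countable X] {m : ℕ} (αv : Fin m → ℝ)
    (h0 : ∀ y, 0 ≤ αv y) (h1 : ∀ y, αv y ≤ 1) (P : X × Fin (m + 1) → ℝ)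
    (hP0 : ∀ z, 0 ≤ P z) (hPs : Summable P) :
    Summable (corrupt P (missConfusion m αv)) := by
  have hnn : (0 : X × Fin (m + 1) → ℝ) ≤ corrupt P (missConfusion m αv) := by
    intro z
    exact Finset.sum_nonneg fun j _ =>
      mul_nonneg (hP0 _) (missConfusion_nonneg αv h0 h1 j z.2)
  rw [summable_prod_of_nonneg hnn]
  constructor
  · intro x; exact Summable.of_finite
  · have hPj : ∀ j : Fin (m + 1), Summable (fun x : X => P (x, j)) := by
      intro j
      exact hPs.comp_injective (fun a a' h => by simpa using congrArg Prod.fst h)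
    have : (fun x : X => ∑' i : Fin (m + 1), corrupt P (missConfusion m αv) (x, i)) =
        fun x => ∑ j : Fin (m + 1), P (x, j) * (∑ i : Fin (m + 1), missConfusion m αv j i) := by
      funext x
      rw [tsum_fintype]
      simp only [corrupt]
      rw [Finset.sum_comm]
      exact Finset.sum_congr rfl fun j _ => (Finset.mul_sum _ _ _).symm
    rw [this]
    exact summable_sum fun j _ => (hPj j).mul_right _
theorem miss_tv_bound {X : Type*} [Countable X] {m : ℕ} (hm : 0 < m) (αv : Fin m → ℝ)
    (hαv0 : ∀ y, 0 ≤ αv y) (hαv1 : ∀ y, αv y ≤ 1)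
    (hbar : (⨆ y, αv y) < 1)
    (P Q : X × Fin (m + 1) → ℝ) (hP : IsPMF P) (hQ : IsPMF Q)
    (hPz : ∀ x : X, P (x, Fin.last m) = 0) (hQz : ∀ x : X, Q (x, Fin.last m) = 0) :
    dTV P Q ≤ (1 / (1 - ⨆ y, αv y)) *
      dTV (corrupt P (missConfusion m αv)) (corrupt Q (missConfusion m αv)) := by
  set c : ℝ := 1 / (1 - ⨆ y, αv y) with hc
  have hpos : (0:ℝ) < 1 - ⨆ y, αv y := by linarith
  have hPt := corrupt_summable αv hαv0 hαv1 P hP.1 hP.2.1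
  have hQt := corrupt_summable αv hαv0 hαv1 Q hQ.1 hQ.2.1
  have hsummL : Summable (fun z => |P z - Q z|) := (hP.2.1.sub hQ.2.1).abs
  have hsummR : Summable (fun z => c *
      |corrupt P (missConfusion m αv) z - corrupt Q (missConfusion m αv) z|) :=
    ((hPt.sub hQt).abs).mul_left c
  have hpt : ∀ z : X × Fin (m + 1), |P z - Q z| ≤ c *
      |corrupt P (missConfusion m αv) z - corrupt Q (missConfusion m αv) z| := by
    rintro ⟨x, i⟩
    by_cases hi : i = Fin.last m
    · subst hi
      rw [hPz x, hQz x]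
      simpa using mul_nonneg (le_of_lt (by positivity : (0:ℝ) < c)) (abs_nonneg _)
    · have hlt : (i : ℕ) < m := Fin.val_lt_last hi
      have hα : missAlpha m αv i = αv ⟨i, hlt⟩ := by simp [missAlpha, hlt]
      have hle : αv ⟨i, hlt⟩ ≤ ⨆ y, αv y :=
        le_ciSup (Set.Finite.bddAbove (Set.finite_range αv)) _
      rw [corrupt_apply_ne_last αv P x i hi, corrupt_apply_ne_last αv Q x i hi, hα]
      have key : P (x, i) * (1 - αv ⟨i, hlt⟩) - Q (x, i) * (1 - αv ⟨i, hlt⟩) =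
          (P (x, i) - Q (x, i)) * (1 - αv ⟨i, hlt⟩) := by ring
      rw [key, abs_mul, abs_of_nonneg (by linarith [hαv1 ⟨i, hlt⟩] : (0:ℝ) ≤ 1 - αv ⟨i, hlt⟩)]
      rw [hc, one_div, inv_mul_eq_div, le_div_iff₀ hpos]
      have := abs_nonneg (P (x, i) - Q (x, i))
      nlinarith
  have htsum : ∑' z, |P z - Q z| ≤ ∑' z, c *
      |corrupt P (missConfusion m αv) z - corrupt Q (missConfusion m αv) z| :=
    Summable.tsum_le_tsum hpt hsummL hsummR
  rw [tsum_mul_left] at htsum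
  unfold dTV
  nlinarith [htsum]
end

section
/- For every λ > 0, the modified loss L_λ(D) = E_{x∼P_X}[φ(D(x,m))] + E_{x∼Q_X}[φ(1 − D(x,m))] + λ·E_{(x,y)∼P}[φ(D(x,y))] + λ·E_{(x,y)∼Q}[φ(1 − D(x,y))] equals (1+λ) times the RCGAN loss under the uniform erasure channel with erasure probability 1/(1+λ); that is, L_λ(D) = (1+λ)·(E_{(x,ỹ)∼P̃}[φ(D(x,ỹ))] + E_{(x,ỹ)∼Q̃}[φ(1 − D(x,ỹ))]), where P̃(x,ỹ) = (λ/(1+λ))·P(x,ỹ) for class labels ỹ < m and P̃(x,m) = (1/(1+λ))·P_X(x), and Q̃ is defined from Q in the same way. (Claim of Section 3.1 that the RCGAN(λ) loss is, in expectation, equivalent to the RCGAN loss when a 1/(1+λ) fraction of the labels are missing.) -/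
open scoped BigOperators
open MeasureTheory

/-- The distribution obtained from `P` by erasing each label independently with probability
`1/(1+λ)`: mass `(λ/(1+λ))·P(x,ỹ)` on class labels `ỹ < m` and `(1/(1+λ))·P_X(x)` on the
missing-label symbol `m`. -/
noncomputable def erasedDist {X : Type*} (m : ℕ) (lam : ℝ) (P : X × Fin (m + 1) → ℝ) :
    X × Fin (m + 1) → ℝ :=
  fun z =>
    if (z.2 : ℕ) < m then (lam / (1 + lam)) * P z
    else (1 / (1 + lam)) * ∑ y, P (z.1, y)

lemma IsPMF.summable_mul_of_abs_le {Z : Type*} {P : Z → ℝ} (hP : IsPMF P) {f : Z → ℝ} {B : ℝ}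
    (hB : ∀ z, |f z| ≤ B) : Summable fun z => P z * f z :=
  .of_norm_bounded (hP.2.1.mul_right B) fun z => by
    rw [Real.norm_eq_abs, abs_mul, abs_of_nonneg (hP.1 z)]
    exact mul_le_mul_of_nonneg_left (hB z) (hP.1 z)

lemma IsPMF.fst_marginal {X Y : Type*} [Fintype Y] {P : X × Y → ℝ} (hP : IsPMF P) :
    IsPMF fun x => ∑ y, P (x, y) := by
  obtain ⟨hnn, hsum, hone⟩ := hP
  have hmarg : HasSum (fun x => ∑ y, P (x, y)) 1 :=
    hone ▸ hsum.hasSum.prod_fiberwise fun x => hasSum_fintype _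
  exact ⟨fun x => Finset.sum_nonneg fun y _ => hnn _, hmarg.summable, hmarg.tsum_eq⟩

section erasedDist

variable {X : Type*} {m : ℕ} (lam : ℝ) {P : X × Fin (m + 1) → ℝ}

/-- When `P` puts no mass on the missing label, the erased distribution is the mixture of `P`
and of the marginal `P_X` transported to the missing label. -/
lemma erasedDist_mul_eq (hPz : ∀ x, P (x, Fin.last m) = 0) (f : X × Fin (m + 1) → ℝ)
    (z : X × Fin (m + 1)) :
    erasedDist m lam P z * f z = lam / (1 + lam) * (P z * f z) + 1 / (1 + lam) *
      Function.extend (fun x => (x, Fin.last m)) (fun x => (∑ y, P (x, y)) * f (x, Fin.last m))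
        0 z := by
  obtain ⟨x, y⟩ := z
  cases y using Fin.lastCases with
  | last =>
    simp [erasedDist, hPz, (Prod.mk_left_injective _).extend_apply, mul_assoc]
  | cast i =>
    have hnot : ¬∃ a : X, (a, Fin.last m) = (x, i.castSucc) := by
      simp [(Fin.castSucc_ne_last i).symm]
    simp [erasedDist, Function.extend_apply' _ _ _ hnot, mul_assoc]

lemma tsum_erasedDist_mul (hP : IsPMF P) (hPz : ∀ x, P (x, Fin.last m) = 0)
    {f : X × Fin (m + 1) → ℝ} {B : ℝ} (hB : ∀ z, |f z| ≤ B) :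
    ∑' z, erasedDist m lam P z * f z = lam / (1 + lam) * ∑' z, P z * f z +
      1 / (1 + lam) * ∑' x, (∑ y, P (x, y)) * f (x, Fin.last m) := by
  have hjoint := (hP.summable_mul_of_abs_le hB).hasSum
  have hmissing := (hasSum_extend_zero (Prod.mk_left_injective (Fin.last m))).mpr
    (hP.fst_marginal.summable_mul_of_abs_le fun x => hB (x, Fin.last m)).hasSum
  refine HasSum.tsum_eq ?_
  rw [funext (erasedDist_mul_eq lam hPz f)]
  exact (hjoint.mul_left _).add (hmissing.mul_left _)

end erasedDist

theorem modified_loss_eq_general {X : Type*} {m : ℕ}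
    (P Q : X × Fin (m + 1) → ℝ) (hP : IsPMF P) (hQ : IsPMF Q)
    (hPz : ∀ x : X, P (x, Fin.last m) = 0) (hQz : ∀ x : X, Q (x, Fin.last m) = 0)
    (φ : ℝ → ℝ) (hφ : ∃ B : ℝ, ∀ t, |φ t| ≤ B)
    (D : X × Fin (m + 1) → ℝ) (lam : ℝ) (hlam : 0 < lam) :
    (∑' x : X, (∑ y, P (x, y)) * φ (D (x, Fin.last m))) +
        (∑' x : X, (∑ y, Q (x, y)) * φ (1 - D (x, Fin.last m))) +
        lam * (∑' z, P z * φ (D z)) + lam * (∑' z, Q z * φ (1 - D z)) =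
      (1 + lam) * ((∑' z, erasedDist m lam P z * φ (D z)) +
        (∑' z, erasedDist m lam Q z * φ (1 - D z))) := by
  obtain ⟨B, hB⟩ := hφ
  rw [tsum_erasedDist_mul lam hP hPz fun z => hB (D z),
    tsum_erasedDist_mul lam hQ hQz fun z => hB (1 - D z)]
  field_simp
  ring

theorem modified_loss_eq {X : Type*} [Countable X] {m : ℕ} (hm : 0 < m)
    (P Q : X × Fin (m + 1) → ℝ) (hP : IsPMF P) (hQ : IsPMF Q)
    (hPz : ∀ x : X, P (x, Fin.last m) = 0) (hQz : ∀ x : X, Q (x, Fin.last m) = 0)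
    (φ : ℝ → ℝ) (hφ : ∃ B : ℝ, ∀ t, |φ t| ≤ B)
    (D : X × Fin (m + 1) → ℝ) (lam : ℝ) (hlam : 0 < lam) :
    (∑' x : X, (∑ y, P (x, y)) * φ (D (x, Fin.last m))) +
        (∑' x : X, (∑ y, Q (x, y)) * φ (1 - D (x, Fin.last m))) +
        lam * (∑' z, P z * φ (D z)) + lam * (∑' z, Q z * φ (1 - D z)) =
      (1 + lam) * ((∑' z, erasedDist m lam P z * φ (D z)) +
        (∑' z, erasedDist m lam Q z * φ (1 - D z))) :=
  modified_loss_eq_general P Q hP hQ hPz hQz φ hφ D lam hlam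
end

section
/- Inverse-channel bound in total variation: for any invertible row-stochastic matrix C ∈ ℝ^{k×k} (nonnegative entries, each row summing to 1) and any probability mass functions P, Q on X × Fin k, the original distributions satisfy d_TV(P, Q) ≤ ‖C⁻¹‖_∞ · d_TV(P̃, Q̃), where ‖A‖_∞ = max_i Σ_j |A_{ij}|. (General channel version of the upper bound used in the proof of Theorem 1, quoted from Theorem 1 of the cited prior work on RCGAN.) -/
open scoped BigOperators
open MeasureTheory

theorem channel_tv_inverse_bound {X : Type*} [Countable X] {k : ℕ} (hk : 0 < k)
    (C : Matrix (Fin k) (Fin k) ℝ)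
    (hC0 : ∀ i j, 0 ≤ C i j) (hC1 : ∀ i, ∑ j, C i j = 1) (hCinv : IsUnit C)
    (P Q : X × Fin k → ℝ) (hP : IsPMF P) (hQ : IsPMF Q) :
    dTV P Q ≤ matInfNorm C⁻¹ * dTV (corrupt P C) (corrupt Q C) := by
  haveI : Nonempty (Fin k) := ⟨⟨0, hk⟩⟩
  set T := C⁻¹ with hT
  set M := matInfNorm T with hM
  set D : X × Fin k → ℝ := fun z => P z - Q z with hDdef
  set E : X × Fin k → ℝ := fun z => corrupt P C z - corrupt Q C z with hEdef
  have hCT : C * T = 1 := Matrix.mul_nonsing_inv C (C.isUnit_iff_isUnit_det.mp hCinv)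
  -- reconstruction: D (x,y) = ∑ i, E (x,i) * T i y
  have hE2 : ∀ x i, E (x, i) = ∑ j, (P (x, j) - Q (x, j)) * C j i := by
    intro x i
    simp [hEdef, corrupt, sub_mul, Finset.sum_sub_distrib]
  have hrec : ∀ x y, D (x, y) = ∑ i, E (x, i) * T i y := by
    intro x y
    have h1 : ∑ i, E (x, i) * T i y = ∑ j, (P (x, j) - Q (x, j)) * (C * T) j y := by
      calc ∑ i, E (x, i) * T i y
          = ∑ i, ∑ j, (P (x, j) - Q (x, j)) * C j i * T i y := by
            refine Finset.sum_congr rfl fun i _ => ?_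
            rw [hE2 x i, Finset.sum_mul]
        _ = ∑ j, ∑ i, (P (x, j) - Q (x, j)) * C j i * T i y := Finset.sum_comm
        _ = ∑ j, (P (x, j) - Q (x, j)) * (C * T) j y := by
            refine Finset.sum_congr rfl fun j _ => ?_
            rw [Matrix.mul_apply, Finset.mul_sum]
            exact Finset.sum_congr rfl fun i _ => by ring
    rw [h1, hCT]
    simp [Matrix.one_apply, hDdef]
  have hMnn : ∀ i, ∑ y, |T i y| ≤ M := by
    intro i
    rw [hM, matInfNorm]
    exact le_ciSup (f := fun i => ∑ j, |T i j|) (Set.Finite.bddAbove (Set.finite_range _)) i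
  have hM0 : 0 ≤ M :=
    le_trans (Finset.sum_nonneg fun j _ => abs_nonneg _) (hMnn (Classical.arbitrary _))
  -- pointwise slice bound
  have hslice : ∀ x, ∑ y, |D (x, y)| ≤ M * ∑ i, |E (x, i)| := by
    intro x
    calc ∑ y, |D (x, y)| = ∑ y, |∑ i, E (x, i) * T i y| := by simp [hrec]
      _ ≤ ∑ y, ∑ i, |E (x, i)| * |T i y| := by
          apply Finset.sum_le_sum; intro y _
          refine le_trans (Finset.abs_sum_le_sum_abs _ _) ?_
          simp [abs_mul]
      _ = ∑ i, |E (x, i)| * ∑ y, |T i y| := by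
          rw [Finset.sum_comm]; simp [Finset.mul_sum]
      _ ≤ ∑ i, |E (x, i)| * M := by
          apply Finset.sum_le_sum; intro i _
          exact mul_le_mul_of_nonneg_left (hMnn i) (abs_nonneg _)
      _ = M * ∑ i, |E (x, i)| := by rw [Finset.mul_sum]; exact Finset.sum_congr rfl fun i _ => mul_comm _ _
  -- summability facts
  have hDsum : Summable fun z => |D z| := ((hP.2.1.sub hQ.2.1)).abs
  have hgsum : Summable fun x => ∑ j, |D (x, j)| := by
    have := ((summable_prod_of_nonneg (fun z => abs_nonneg (D z))).mp hDsum).2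
    simpa [tsum_fintype] using this
  have hEle : ∀ x, ∑ i, |E (x, i)| ≤ ∑ j, |D (x, j)| := by
    intro x
    calc ∑ i, |E (x, i)| = ∑ i, |∑ j, D (x, j) * C j i| := by
          simp [hEdef, corrupt, hDdef, Finset.sum_sub_distrib, sub_mul]
      _ ≤ ∑ i, ∑ j, |D (x, j)| * C j i := by
          apply Finset.sum_le_sum; intro i _
          refine le_trans (Finset.abs_sum_le_sum_abs _ _) ?_
          apply Finset.sum_le_sum; intro j _
          rw [abs_mul, abs_of_nonneg (hC0 j i)]
      _ = ∑ j, |D (x, j)| * ∑ i, C j i := by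
          rw [Finset.sum_comm]; simp [Finset.mul_sum]
      _ = ∑ j, |D (x, j)| := by simp [hC1]
  have hEslice : Summable fun x => ∑ i, |E (x, i)| :=
    Summable.of_nonneg_of_le (fun x => Finset.sum_nonneg fun i _ => abs_nonneg _) hEle hgsum
  have hEsum : Summable fun z => |E z| := by
    rw [summable_prod_of_nonneg (fun z => abs_nonneg (E z))]
    exact ⟨fun x => Summable.of_finite, by simpa [tsum_fintype] using hEslice⟩
  -- main tsum inequality
  have hmain : ∑' z, |D z| ≤ M * ∑' z, |E z| := by
    rw [Summable.tsum_prod' hDsum (fun x => Summable.of_finite),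
        Summable.tsum_prod' hEsum (fun x => Summable.of_finite)]
    simp only [tsum_fintype]
    rw [← tsum_mul_left]
    exact Summable.tsum_le_tsum hslice hgsum (hEslice.mul_left M)
  have : dTV P Q = (1/2) * ∑' z, |D z| := rfl
  rw [this, dTV]
  calc (1/2 : ℝ) * ∑' z, |D z| ≤ (1/2) * (M * ∑' z, |E z|) := by linarith [hmain]
    _ = M * ((1/2) * ∑' z, |E z|) := by ring
end
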